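/- Let F be a field with a valuation ν : F^× → Γ into a totally ordered abelian group Γ, with ring of integers O_F. Then every τ ∈ GL_n(F) can be written as τ = A·U·Λ where A ∈ GL_n(O_F), U is a unipotent upper triangular matrix over F, and Λ is an invertible diagonal matrix over F. -/

import Mathlib

/-!
Gaussian elimination with pivots of maximal valuation. Dividing a column by its entry of largest
valuation makes it integral with a unit entry, so some element of `GLₙ(O_F)` sends it to a
multiple of the first basis vector. Inducting on the lower right block, `g * τ` is upper
triangular for some `g ∈ GLₙ(O_F)`, and an invertible upper triangular matrix is a unipotent
upper triangular one times its diagonal.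
-/

open Matrix

namespace Matrix

variable {R : Type*} {n : ℕ}

/-- The block matrix `!![1, 0; 0, M]`. -/
def oneBlockDiag [Zero R] [One R] (M : Matrix (Fin n) (Fin n) R) :
    Matrix (Fin (n + 1)) (Fin (n + 1)) R :=
  of (Fin.cons (Fin.cons 1 0) fun i => Fin.cons 0 (M i))

section

variable [Zero R] [One R] (M : Matrix (Fin n) (Fin n) R)

@[simp] lemma oneBlockDiag_zero_zero : oneBlockDiag M 0 0 = 1 := rfl

@[simp] lemma oneBlockDiag_zero_succ (j : Fin n) : oneBlockDiag M 0 j.succ = 0 := rfl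

@[simp] lemma oneBlockDiag_succ_zero (i : Fin n) : oneBlockDiag M i.succ 0 = 0 := rfl

@[simp] lemma oneBlockDiag_succ_succ (i j : Fin n) : oneBlockDiag M i.succ j.succ = M i j := rfl

lemma oneBlockDiag_map {S : Type*} [Zero S] [One S] (f : R → S) (hf₀ : f 0 = 0)
    (hf₁ : f 1 = 1) :
    (oneBlockDiag M).map f = oneBlockDiag (M.map f) := by
  ext i j
  cases i using Fin.cases <;> cases j using Fin.cases <;> simp [hf₀, hf₁]

end

section

variable [NonAssocSemiring R]

lemma oneBlockDiag_mul_apply_zero (N : Matrix (Fin n) (Fin n) R)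
    (M : Matrix (Fin (n + 1)) (Fin (n + 1)) R) (j : Fin (n + 1)) :
    (oneBlockDiag N * M) 0 j = M 0 j := by
  simp [mul_apply, Fin.sum_univ_succ]

lemma oneBlockDiag_mul_apply_succ (N : Matrix (Fin n) (Fin n) R)
    (M : Matrix (Fin (n + 1)) (Fin (n + 1)) R) (i : Fin n) (j : Fin (n + 1)) :
    (oneBlockDiag N * M) i.succ j = (N * M.submatrix Fin.succ id) i j := by
  simp [mul_apply, Fin.sum_univ_succ]

variable (R n) in
def oneBlockDiagHom : Matrix (Fin n) (Fin n) R →* Matrix (Fin (n + 1)) (Fin (n + 1)) R where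
  toFun := oneBlockDiag
  map_one' := by
    ext i j
    cases i using Fin.cases <;> cases j using Fin.cases <;> simp [one_apply, eq_comm]
  map_mul' N M := by
    ext i j
    cases i using Fin.cases with
    | zero => rw [oneBlockDiag_mul_apply_zero]; rfl
    | succ i =>
      rw [oneBlockDiag_mul_apply_succ]
      cases j using Fin.cases <;> simp [mul_apply]

lemma isUpperTriangular_oneBlockDiag_mul {N : Matrix (Fin n) (Fin n) R}
    {M : Matrix (Fin (n + 1)) (Fin (n + 1)) R} (hM : ∀ i : Fin n, M i.succ 0 = 0)
    (h : (N * M.submatrix Fin.succ Fin.succ).IsUpperTriangular) :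
    (oneBlockDiag N * M).IsUpperTriangular := by
  intro i j hji
  cases i using Fin.cases with
  | zero => exact absurd hji (Fin.not_lt_zero _)
  | succ i =>
    rw [oneBlockDiag_mul_apply_succ]
    cases j using Fin.cases with
    | zero => simp [mul_apply, hM]
    | succ j => exact h (Fin.succ_lt_succ_iff.mp hji)

end

lemma IsUpperTriangular.diag_ne_zero_of_isUnit {ι : Type*} [CommRing R] [Nontrivial R]
    [LinearOrder ι] [Fintype ι] [DecidableEq ι] {T : Matrix ι ι R} (hT : T.IsUpperTriangular)
    (hunit : IsUnit T) (i : ι) : T i i ≠ 0 := by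
  have hdet := (isUnit_iff_isUnit_det T).mp hunit
  rw [det_of_isUpperTriangular hT] at hdet
  exact (isUnit_of_dvd_unit (Finset.dvd_prod_of_mem _ (Finset.mem_univ i)) hdet).ne_zero

lemma IsUpperTriangular.exists_unipotent_mul_diagonal {K ι : Type*} [DivisionRing K]
    [LinearOrder ι] [Fintype ι] [DecidableEq ι] {T : Matrix ι ι K} (hT : T.IsUpperTriangular)
    (hdiag : ∀ i, T i i ≠ 0) :
    ∃ U : Matrix ι ι K, U.IsUpperTriangular ∧ (∀ i, U i i = 1) ∧
      T = U * diagonal (fun i => T i i) := by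
  refine ⟨T * diagonal fun i => (T i i)⁻¹, hT.mul (blockTriangular_diagonal _),
    fun i => ?_, ?_⟩
  · simp [hdiag]
  · rw [Matrix.mul_assoc, diagonal_mul_diagonal]
    ext i j
    simp [hdiag]

/-- Swap the unit entry into position `k`, giving `w'`; then `1 + (w' - eₖ) eₖᵀ` sends `eₖ`
to `w'` and has determinant `w' k`, so its inverse does the rest. -/
lemma GeneralLinearGroup.exists_mulVec_eq_single {ι : Type*} [CommRing R] [Fintype ι]
    [DecidableEq ι] {w : ι → R} {i : ι} (hw : IsUnit (w i)) (k : ι) :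
    ∃ g : GL ι R, (g : Matrix ι ι R) *ᵥ w = Pi.single k 1 := by
  set σ := Equiv.swap i k
  set e : ι → R := Pi.single k 1
  set w' := w ∘ σ
  have hdet : (1 + vecMulVec (w' - e) e).det = w i := by
    rw [vecMulVec_eq Unit, det_one_add_mul_comm, det_unique, Matrix.add_apply, one_apply_eq,
      replicateRow_mul_replicateCol_apply]
    simp [e, w', σ]
  have hσ : σ.permMatrix R * σ.permMatrix R = 1 := by
    rw [← permMatrix_mul, Equiv.swap_mul_self, permMatrix_one]
  let P : GL ι R := ⟨σ.permMatrix R, σ.permMatrix R, hσ, hσ⟩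
  let M : GL ι R := GeneralLinearGroup.mk'' _ (hdet ▸ hw)
  have hP : (P : Matrix ι ι R) *ᵥ w = w' := permMatrix_mulVec σ
  have hM : (M : Matrix ι ι R) *ᵥ e = w' := by
    change (1 + vecMulVec (w' - e) e) *ᵥ e = w'
    rw [add_mulVec, one_mulVec, vecMulVec_mulVec]
    simp [e]
  refine ⟨M⁻¹ * P, ?_⟩
  rw [Units.val_mul, ← mulVec_mulVec, hP, ← hM, mulVec_mulVec, ← Units.val_mul,
    inv_mul_cancel, Units.val_one, one_mulVec]

end Matrix

namespace Valuation

variable {F Γ₀ : Type*} [Field F] [LinearOrderedCommGroupWithZero Γ₀] (v : Valuation F Γ₀)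

lemma exists_integer_GL_mulVec_eq_single {ι : Type*} [Fintype ι] [DecidableEq ι] (x : ι → F)
    (k : ι) : ∃ (g : GL ι v.integer) (c : F),
      (GeneralLinearGroup.map v.integer.subtype g : Matrix ι ι F) *ᵥ x = Pi.single k c := by
  rcases eq_or_ne x 0 with rfl | hx
  · exact ⟨1, 0, by simp⟩
  obtain ⟨j₀, hj₀⟩ := Function.ne_iff.mp hx
  have : Nonempty ι := ⟨j₀⟩
  obtain ⟨i, hmax⟩ := Finite.exists_max fun i => v (x i)
  have hi : x i ≠ 0 := fun h => hj₀ (by simpa [h] using hmax j₀)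
  let w : ι → v.integer := fun j =>
    ⟨x j / x i, by
      rw [mem_integer_iff, map_div₀]
      exact div_le_one_of_le₀ (hmax j) zero_le⟩
  have hwi : w i = 1 := Subtype.ext (div_self hi)
  obtain ⟨g, hg⟩ := GeneralLinearGroup.exists_mulVec_eq_single (w := w) (hwi ▸ isUnit_one) k
  have hx : x i • (v.integer.subtype ∘ w) = x := by
    ext j
    simp [w, mul_div_cancel₀ _ hi]
  refine ⟨g, x i, ?_⟩
  nth_rw 1 [← hx]
  ext j
  rw [mulVec_smul, Pi.smul_apply, GeneralLinearGroup.val_map_apply, ← RingHom.map_mulVec, hg]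
  simp [Pi.single_apply]

lemma exists_integer_GL_mul_isUpperTriangular : ∀ {n : ℕ} (τ : Matrix (Fin n) (Fin n) F),
    ∃ g : GL (Fin n) v.integer,
      ((GeneralLinearGroup.map v.integer.subtype g : Matrix (Fin n) (Fin n) F) *
        τ).IsUpperTriangular
  | 0, _ => ⟨1, fun i => i.elim0⟩
  | n + 1, τ => by
    obtain ⟨g₁, c, hg₁⟩ := v.exists_integer_GL_mulVec_eq_single (τ.col 0) 0
    set τ₁ := (GeneralLinearGroup.map v.integer.subtype g₁ : Matrix _ _ F) * τ
    have hτ₁ : ∀ i : Fin n, τ₁ i.succ 0 = 0 := fun i =>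
      (congr_fun hg₁ i.succ).trans (Pi.single_eq_of_ne (Fin.succ_ne_zero i) c)
    obtain ⟨g', hg'⟩ :=
      exists_integer_GL_mul_isUpperTriangular (τ₁.submatrix Fin.succ Fin.succ)
    refine ⟨Units.map (oneBlockDiagHom _ _) g' * g₁, ?_⟩
    have hmap : (GeneralLinearGroup.map v.integer.subtype (Units.map (oneBlockDiagHom _ _) g') :
        Matrix (Fin (n + 1)) (Fin (n + 1)) F) =
        oneBlockDiag (GeneralLinearGroup.map v.integer.subtype g' : Matrix (Fin n) (Fin n) F) :=
      oneBlockDiag_map _ _ (map_zero _) (map_one _)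
    rw [map_mul, Units.val_mul, Matrix.mul_assoc, hmap]
    exact isUpperTriangular_oneBlockDiag_mul hτ₁ hg'

end Valuation

/-- **Iwasawa decomposition for `GLₙ` over a valuation field.**
`F` is a field with a valuation `v` (written multiplicatively, so the ring of
integers is `{x : v x ≤ 1}`).  Every invertible matrix `τ` over `F` factors as
`τ = A * U * Λ` where `A` is invertible over the ring of integers (its inverse
also has integral entries), `U` is unipotent upper triangular and `Λ` is an
invertible diagonal matrix. -/
theorem iwasawa_decomposition_GLn
    {F : Type*} [Field F] {Γ₀ : Type*} [LinearOrderedCommGroupWithZero Γ₀]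
    (v : Valuation F Γ₀) (n : ℕ)
    (τ : Matrix (Fin n) (Fin n) F) (hτ : IsUnit τ) :
    ∃ A U Λ : Matrix (Fin n) (Fin n) F,
      -- `A ∈ GLₙ(O_F)` : `A` and its inverse have entries in the ring of integers
      (∀ i j, v (A i j) ≤ 1) ∧
      (∃ B : Matrix (Fin n) (Fin n) F,
        (∀ i j, v (B i j) ≤ 1) ∧ A * B = 1 ∧ B * A = 1) ∧
      -- `U` is unipotent upper triangular
      (∀ i j : Fin n, j < i → U i j = 0) ∧ (∀ i, U i i = 1) ∧
      -- `Λ` is an invertible diagonal matrix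
      (∀ i j : Fin n, i ≠ j → Λ i j = 0) ∧ (∀ i, Λ i i ≠ 0) ∧
      τ = A * U * Λ := by
  obtain ⟨g, hT⟩ := v.exists_integer_GL_mul_isUpperTriangular τ
  set G := GeneralLinearGroup.map v.integer.subtype g
  set T := (G : Matrix (Fin n) (Fin n) F) * τ
  have hdiag : ∀ i, T i i ≠ 0 := hT.diag_ne_zero_of_isUnit (G.isUnit.mul hτ)
  obtain ⟨U, hU, hU₁, hTU⟩ := hT.exists_unipotent_mul_diagonal hdiag
  have hG : ((GeneralLinearGroup.map v.integer.subtype g⁻¹ * G : GL (Fin n) F) :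
      Matrix (Fin n) (Fin n) F) = 1 := by
    rw [GeneralLinearGroup.map_inv_mul_map, Units.val_one]
  refine ⟨GeneralLinearGroup.map v.integer.subtype g⁻¹, U, diagonal fun i => T i i,
    fun i j => (g⁻¹ i j).2, ⟨G, fun i j => (g i j).2, hG, ?_⟩, hU, hU₁,
    fun i j hij => diagonal_apply_ne _ hij, by simpa using hdiag, ?_⟩
  · rw [← Units.val_mul, GeneralLinearGroup.map_mul_map_inv, Units.val_one]
  · rw [Matrix.mul_assoc, ← hTU, ← Matrix.mul_assoc, ← Units.val_mul, hG, Matrix.one_mul]
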